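/- Let H be a bialgebra over ℤ, let e be a curve in H, and let φ_e : NSymm → H be the unique ring homomorphism with φ_e(Z_i) = e(i) for all i ≥ 1. Then: (i) for every curve d in NSymm, the sequence n ↦ φ_e(d(n)) is a curve in H; (ii) if H = NSymm (with the comultiplication Δ defined below) and both d and e are V-curves, then n ↦ φ_e(d(n)) is a V-curve. -/

import Mathlib

/-!
For a curve `e` in `H`, both `Δ_H ∘ φ_e` and `(φ_e ⊗ φ_e) ∘ Δ` are algebra maps out of `NSymm`,
which is generated by the curve `Z`; they agree on each `Z_n` precisely because `e = φ_e ∘ Z` is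
a curve. Hence they are equal, and evaluating them at `d n` shows that `φ_e ∘ d` is a curve.
In the same way `V_r ∘ φ_e = φ_e ∘ V_r` when `e` is a `V`-curve, so `φ_e ∘ d` inherits the
`V`-property of `d`.
-/

open scoped TensorProduct

noncomputable section

/-- `NSymm`, the free ring on `Z₁, Z₂, …`; generator `i : ℕ` represents `Z_{i+1}`. -/
abbrev NSymm : Type := MonoidAlgebra ℤ (FreeMonoid ℕ)

def Zgen : ℕ → NSymm
  | 0 => 1
  | n + 1 => MonoidAlgebra.of ℤ (FreeMonoid ℕ) (FreeMonoid.of n)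

def Zword (l : List ℕ) : NSymm := (l.map Zgen).prod

def Delta : NSymm →ₐ[ℤ] NSymm ⊗[ℤ] NSymm :=
  MonoidAlgebra.lift ℤ (NSymm ⊗[ℤ] NSymm) (FreeMonoid ℕ)
    (FreeMonoid.lift fun i =>
      ∑ a ∈ Finset.range (i + 2), Zgen a ⊗ₜ[ℤ] Zgen (i + 1 - a))

def IsPrimitive (P : NSymm) : Prop :=
  Delta P = 1 ⊗ₜ[ℤ] P + P ⊗ₜ[ℤ] 1

def Ver (r : ℕ) : NSymm →ₐ[ℤ] NSymm :=
  MonoidAlgebra.lift ℤ NSymm (FreeMonoid ℕ)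
    (FreeMonoid.lift fun i => if r ∣ (i + 1) then Zgen ((i + 1) / r) else 0)

def NewtonP (n : ℕ) : NSymm :=
  ∑ c : Composition n,
    ((-1 : ℤ) ^ (c.length + 1) * (c.blocks.getLastD 0 : ℤ)) • Zword c.blocks

def IsComposition (l : List ℕ) : Prop := l ≠ [] ∧ ∀ a ∈ l, 0 < a

def lexLt (l l' : List ℕ) : Prop := List.Lex (· < ·) l l'

def IsLyndon (l : List ℕ) : Prop :=
  IsComposition l ∧ ∀ i, 0 < i → i < l.length → lexLt l (l.drop i)

def gcdL (l : List ℕ) : ℕ := l.foldr Nat.gcd 0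

def wtC (l : List ℕ) : ℕ := l.sum

def wllLt (l l' : List ℕ) : Prop :=
  wtC l < wtC l' ∨ (wtC l = wtC l' ∧
    (l.length < l'.length ∨ (l.length = l'.length ∧ lexLt l l')))

def coeffw (P : NSymm) (w : FreeMonoid ℕ) : ℤ := P.coeff w

def coeffC (P : NSymm) (l : List ℕ) : ℤ := coeffw P (FreeMonoid.ofList (l.map (· - 1)))

def wtWord (w : FreeMonoid ℕ) : ℕ := (FreeMonoid.toList w).sum + (FreeMonoid.toList w).length

def IsHomog (P : NSymm) (n : ℕ) : Prop := ∀ w, coeffw P w ≠ 0 → wtWord w = n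

abbrev TwoNSymm : Type := MonoidAlgebra ℤ (FreeMonoid (ℕ ⊕ ℕ))

def Xgen : ℕ → TwoNSymm
  | 0 => 1
  | n + 1 => MonoidAlgebra.of ℤ (FreeMonoid (ℕ ⊕ ℕ)) (FreeMonoid.of (Sum.inl n))

def Ygen : ℕ → TwoNSymm
  | 0 => 1
  | n + 1 => MonoidAlgebra.of ℤ (FreeMonoid (ℕ ⊕ ℕ)) (FreeMonoid.of (Sum.inr n))

def Delta2 : TwoNSymm →ₐ[ℤ] TwoNSymm ⊗[ℤ] TwoNSymm :=
  MonoidAlgebra.lift ℤ (TwoNSymm ⊗[ℤ] TwoNSymm) (FreeMonoid (ℕ ⊕ ℕ))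
    (FreeMonoid.lift fun s =>
      Sum.elim
        (fun i => ∑ a ∈ Finset.range (i + 2), Xgen a ⊗ₜ[ℤ] Xgen (i + 1 - a))
        (fun i => ∑ a ∈ Finset.range (i + 2), Ygen a ⊗ₜ[ℤ] Ygen (i + 1 - a)) s)

def Ver2 (r : ℕ) : TwoNSymm →ₐ[ℤ] TwoNSymm :=
  MonoidAlgebra.lift ℤ TwoNSymm (FreeMonoid (ℕ ⊕ ℕ))
    (FreeMonoid.lift fun s =>
      Sum.elim
        (fun i => if r ∣ (i + 1) then Xgen ((i + 1) / r) else 0)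
        (fun i => if r ∣ (i + 1) then Ygen ((i + 1) / r) else 0) s)

def coeffw2 (P : TwoNSymm) (w : FreeMonoid (ℕ ⊕ ℕ)) : ℤ := P.coeff w

def xwt (w : FreeMonoid (ℕ ⊕ ℕ)) : ℕ :=
  ((FreeMonoid.toList w).map (Sum.elim (· + 1) (fun _ => 0))).sum

def ywt (w : FreeMonoid (ℕ ⊕ ℕ)) : ℕ :=
  ((FreeMonoid.toList w).map (Sum.elim (fun _ => 0) (· + 1))).sum

def wlLt (p q : ℕ × ℕ) : Prop :=
  p.1 + p.2 < q.1 + q.2 ∨ (p.1 + p.2 = q.1 + q.2 ∧ p.1 < q.1)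

def reduceP (p : ℕ × ℕ) : ℕ × ℕ := (p.1 / Nat.gcd p.1 p.2, p.2 / Nat.gcd p.1 p.2)

def LIdentity (L : ℕ → ℕ → TwoNSymm) : Prop :=
  ∀ u v : ℕ, 1 ≤ u → 1 ≤ v →
    Xgen u * Ygen v - Ygen v * Xgen u =
      ∑ᶠ p ∈ {p : (ℕ × ℕ) × List (ℕ × ℕ) |
          p.2 ≠ [] ∧ (∀ q ∈ p.2, 0 < q.1 ∧ 0 < q.2) ∧
          p.1.1 + (p.2.map Prod.fst).sum = u ∧
          p.1.2 + (p.2.map Prod.snd).sum = v ∧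
          (p.2.map reduceP).Pairwise wlLt},
        Ygen p.1.2 * Xgen p.1.1 * (p.2.map fun q => L q.1 q.2).prod

def NIdentity (N : ℕ → ℕ → NSymm) : Prop :=
  ∀ u v : ℕ, 1 ≤ u → 1 ≤ v →
    (((u + v).choose u : ℤ)) • Zgen (u + v) =
      ∑ᶠ p ∈ {p : (ℕ × ℕ) × List (ℕ × ℕ) |
          (∀ q ∈ p.2, 0 < q.1 ∧ 0 < q.2) ∧
          p.1.1 + (p.2.map Prod.fst).sum = u ∧
          p.1.2 + (p.2.map Prod.snd).sum = v ∧
          (p.2.map reduceP).Pairwise wlLt},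
        Zgen p.1.1 * Zgen p.1.2 * (p.2.map fun q => N q.1 q.2).prod

def substXY (d1 d2 : ℕ → NSymm) : TwoNSymm →ₐ[ℤ] NSymm :=
  MonoidAlgebra.lift ℤ NSymm (FreeMonoid (ℕ ⊕ ℕ))
    (FreeMonoid.lift fun s => Sum.elim (fun i => d1 (i + 1)) (fun i => d2 (i + 1)) s)

def substZ (e : ℕ → NSymm) : NSymm →ₐ[ℤ] NSymm :=
  MonoidAlgebra.lift ℤ NSymm (FreeMonoid ℕ) (FreeMonoid.lift fun i => e (i + 1))

def dSpec (L : ℕ → ℕ → TwoNSymm) (d : List ℕ → ℕ → NSymm) : Prop :=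
  (∀ l, IsLyndon l → d l 0 = 1) ∧
  (∀ n, 0 < n → ∀ i, d [n] i = Zgen i) ∧
  (∀ l, IsLyndon l → 1 < l.length →
    ∀ i₀, 0 < i₀ → i₀ < l.length →
      (∀ j, 0 < j → j < l.length → ¬ lexLt (l.drop j) (l.drop i₀)) →
      ∀ i, d l i =
        substXY (d (l.take i₀)) (d (l.drop i₀))
          (L (i * gcdL (l.take i₀) / gcdL l) (i * gcdL (l.drop i₀) / gcdL l)))

def Pof (d : List ℕ → ℕ → NSymm) (l : List ℕ) : NSymm := substZ (d l) (NewtonP (gcdL l))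

def IsCurveN (c : ℕ → NSymm) : Prop :=
  c 0 = 1 ∧ ∀ n, Delta (c n) = ∑ i ∈ Finset.range (n + 1), c i ⊗ₜ[ℤ] c (n - i)

def IsCurve2 (c : ℕ → TwoNSymm) : Prop :=
  c 0 = 1 ∧ ∀ n, Delta2 (c n) = ∑ i ∈ Finset.range (n + 1), c i ⊗ₜ[ℤ] c (n - i)

def IsVCurveN (c : ℕ → NSymm) : Prop :=
  IsCurveN c ∧ ∀ r n, 1 ≤ r → 1 ≤ n → Ver r (c n) = if r ∣ n then c (n / r) else 0

def IsCurveB (R : Type) [CommRing R] {H : Type} [Ring H] [Bialgebra R H] (c : ℕ → H) : Prop :=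
  c 0 = 1 ∧ ∀ n, Coalgebra.comul (R := R) (c n) = ∑ i ∈ Finset.range (n + 1), c i ⊗ₜ[R] c (n - i)

def Is2CurveB (R : Type) [CommRing R] {H : Type} [Ring H] [Bialgebra R H]
    (c : ℕ → ℕ → H) : Prop :=
  c 0 0 = 1 ∧ ∀ n m, Coalgebra.comul (R := R) (c n m) =
    ∑ i ∈ Finset.range (n + 1), ∑ j ∈ Finset.range (m + 1),
      c i j ⊗ₜ[R] c (n - i) (m - j)

def Mq (α : List ℕ) : MvPowerSeries ℕ ℤ :=
  fun m => if (m.support.sort (· ≤ ·)).map m = α then 1 else 0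

def degm (m : ℕ →₀ ℕ) : ℕ := m.sum fun _ e => e

def QSymmMod : Submodule ℤ (MvPowerSeries ℕ ℤ) :=
  Submodule.span ℤ (insert 1 {f | ∃ α : List ℕ, IsComposition α ∧ f = Mq α})

abbrev NSymmQ : Type := MonoidAlgebra ℚ (FreeMonoid ℕ)

def ZgenQ : ℕ → NSymmQ
  | 0 => 1
  | n + 1 => MonoidAlgebra.of ℚ (FreeMonoid ℕ) (FreeMonoid.of n)

def DeltaQ : NSymmQ →ₐ[ℚ] NSymmQ ⊗[ℚ] NSymmQ :=
  MonoidAlgebra.lift ℚ (NSymmQ ⊗[ℚ] NSymmQ) (FreeMonoid ℕ)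
    (FreeMonoid.lift fun i =>
      ∑ a ∈ Finset.range (i + 2), ZgenQ a ⊗ₜ[ℚ] ZgenQ (i + 1 - a))

def IsPrimitiveQ (P : NSymmQ) : Prop :=
  DeltaQ P = 1 ⊗ₜ[ℚ] P + P ⊗ₜ[ℚ] 1

def toQ : NSymm →ₐ[ℤ] NSymmQ :=
  MonoidAlgebra.lift ℤ NSymmQ (FreeMonoid ℕ) (MonoidAlgebra.of ℚ (FreeMonoid ℕ))

/-- `RingHom.toIntAlgHom` for an arbitrary `ℤ`-algebra structure, such as the one underlying a
bialgebra, which is not definitionally the canonical one. -/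
def RingHom.toIntAlgHom' {A B : Type*} [Ring A] [Ring B] [Algebra ℤ A] [Algebra ℤ B]
    (f : A →+* B) : A →ₐ[ℤ] B :=
  { f with commutes' := fun n => by simp }

section Curves

variable {R N A : Type*} [CommSemiring R] [Semiring N] [Algebra R N] [Semiring A] [Algebra R A]

/-- `IsCurveN` and `IsCurveB ℤ` are, definitionally, the cases `Ψ = Delta` and
`Ψ = Bialgebra.comulAlgHom ℤ H`. -/
def IsCurveAlong (Ψ : A →ₐ[R] A ⊗[R] A) (c : ℕ → A) : Prop :=
  c 0 = 1 ∧ ∀ n, Ψ (c n) = ∑ i ∈ Finset.range (n + 1), c i ⊗ₜ[R] c (n - i)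

lemma IsCurveAlong.map {ΨN : N →ₐ[R] N ⊗[R] N} {ΨA : A →ₐ[R] A ⊗[R] A} {f : N →ₐ[R] A}
    (hf : ΨA.comp f = (Algebra.TensorProduct.map f f).comp ΨN) {c : ℕ → N}
    (hc : IsCurveAlong ΨN c) : IsCurveAlong ΨA (f ∘ c) := by
  refine ⟨by simp [hc.1], fun n => ?_⟩
  rw [Function.comp_apply, ← AlgHom.comp_apply, hf, AlgHom.comp_apply, hc.2, map_sum]
  simp only [Algebra.TensorProduct.map_tmul, Function.comp_apply]

lemma comp_eq_map_comp_of_isCurveAlong {ΨN : N →ₐ[R] N ⊗[R] N} {ΨA : A →ₐ[R] A ⊗[R] A}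
    {g : ℕ → N} (hg : IsCurveAlong ΨN g) (hgen : Algebra.adjoin R (Set.range g) = ⊤)
    {φ : N →ₐ[R] A} (hφ : IsCurveAlong ΨA (φ ∘ g)) :
    ΨA.comp φ = (Algebra.TensorProduct.map φ φ).comp ΨN := by
  refine AlgHom.ext_of_adjoin_eq_top hgen ?_
  rintro _ ⟨n, rfl⟩
  simpa [hg.2, Algebra.TensorProduct.map_tmul] using hφ.2 n

lemma IsCurveAlong.substitution {ΨN : N →ₐ[R] N ⊗[R] N} {ΨA : A →ₐ[R] A ⊗[R] A}
    {g : ℕ → N} (hg : IsCurveAlong ΨN g) (hgen : Algebra.adjoin R (Set.range g) = ⊤)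
    {φ : N →ₐ[R] A} (hφ : IsCurveAlong ΨA (φ ∘ g)) {d : ℕ → N} (hd : IsCurveAlong ΨN d) :
    IsCurveAlong ΨA (φ ∘ d) :=
  hd.map (comp_eq_map_comp_of_isCurveAlong hg hgen hφ)

end Curves

lemma Zgen_zero : Zgen 0 = 1 := rfl

lemma adjoin_range_Zgen : Algebra.adjoin ℤ (Set.range Zgen) = ⊤ := by
  refine Algebra.eq_top_iff.2 fun x => ?_
  induction x using MonoidAlgebra.induction_on with
  | of w =>
    induction w using FreeMonoid.inductionOn' with
    | one => exact one_mem _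
    | of_mul n w ih =>
      rw [map_mul]
      exact mul_mem (Algebra.subset_adjoin ⟨n + 1, rfl⟩) ih
  | add x y hx hy => exact add_mem hx hy
  | smul r x hx => exact Subalgebra.smul_mem _ hx r

lemma isCurveN_Zgen : IsCurveN Zgen := by
  refine ⟨rfl, fun n => ?_⟩
  cases n with
  | zero => simp [Zgen_zero, Algebra.TensorProduct.one_def]
  | succ n => simp [Delta, Zgen]

lemma Ver_Zgen (r n : ℕ) : Ver r (Zgen n) = if r ∣ n then Zgen (n / r) else 0 := by
  cases n with
  | zero => simp [Zgen_zero]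
  | succ n => simp [Ver, Zgen]

lemma Ver_comp_eq_comp_Ver {φ : NSymm →ₐ[ℤ] NSymm} {r : ℕ}
    (hφ : ∀ n, 1 ≤ n → Ver r (φ (Zgen n)) = if r ∣ n then φ (Zgen (n / r)) else 0) :
    (Ver r).comp φ = φ.comp (Ver r) := by
  refine AlgHom.ext_of_adjoin_eq_top adjoin_range_Zgen ?_
  rintro _ ⟨_ | n, rfl⟩
  · simp [Zgen_zero]
  · rw [AlgHom.comp_apply, AlgHom.comp_apply, hφ (n + 1) n.succ_pos, Ver_Zgen]
    split_ifs <;> simp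

lemma IsVCurveN.substitution {φ : NSymm →ₐ[ℤ] NSymm} (hφ : IsVCurveN (φ ∘ Zgen)) {d : ℕ → NSymm}
    (hd : IsVCurveN d) : IsVCurveN (φ ∘ d) := by
  refine ⟨IsCurveAlong.substitution isCurveN_Zgen adjoin_range_Zgen hφ.1 hd.1, fun r n hr hn => ?_⟩
  rw [Function.comp_apply, ← AlgHom.comp_apply, Ver_comp_eq_comp_Ver (hφ.2 r · hr),
    AlgHom.comp_apply, hd.2 r n hr hn]
  split_ifs <;> simp

lemma RingHom.comp_Zgen_eq {A : Type*} [Semiring A] {φ : NSymm →+* A} {e : ℕ → A} (he : e 0 = 1)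
    (hφ : ∀ i, 1 ≤ i → φ (Zgen i) = e i) : φ ∘ Zgen = e := by
  funext i
  cases i with
  | zero => simp [Zgen_zero, he]
  | succ i => exact hφ (i + 1) i.succ_pos

/-- Substituting a curve into a curve yields a curve; for `V`-curves in `NSymm`,
the result is again a `V`-curve. -/
theorem curve_substitution :
    (∀ (H : Type) [Ring H] [Bialgebra ℤ H], ∀ e : ℕ → H, IsCurveB ℤ e →
      ∀ φ : NSymm →+* H, (∀ i : ℕ, 1 ≤ i → φ (Zgen i) = e i) →
      ∀ d : ℕ → NSymm, IsCurveN d → IsCurveB ℤ (fun n => φ (d n))) ∧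
    (∀ e : ℕ → NSymm, IsVCurveN e →
      ∀ φ : NSymm →+* NSymm, (∀ i : ℕ, 1 ≤ i → φ (Zgen i) = e i) →
      ∀ d : ℕ → NSymm, IsVCurveN d → IsVCurveN (fun n => φ (d n))) := by
  refine ⟨fun H _ _ e he φ hφ d hd => ?_, fun e he φ hφ d hd => ?_⟩
  · have hφe : IsCurveAlong (Bialgebra.comulAlgHom ℤ H) (φ.toIntAlgHom' ∘ Zgen) :=
      (RingHom.comp_Zgen_eq he.1 hφ).symm ▸ he
    exact IsCurveAlong.substitution isCurveN_Zgen adjoin_range_Zgen hφe hd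
  · have hφe : IsVCurveN (φ.toIntAlgHom' ∘ Zgen) := (RingHom.comp_Zgen_eq he.1.1 hφ).symm ▸ he
    exact hφe.substitution hd

end
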